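/- Let p ∈ Δ̄∖Δ be mildly degenerate (at least one of its five associated triples is a permutation of (0,β,π−β) with 0 < β < π) and let q ∈ Δ. Then the function t ↦ V((1−t)·p + t·q) is differentiable on (0,1) and its derivative tends to +∞ as t → 0⁺. -/

import Mathlib

open Real Filter

open MeasureTheory Set Topology

/-- Milnor's Lobachevsky function `Л(x) = -∫₀ˣ log |2 sin t| dt`. -/
noncomputable def lob (x : ℝ) : ℝ := -∫ t in (0:ℝ)..x, Real.log |2 * Real.sin t|

/-- The truncated volume `V(α₁₂,α₂₃,α₃₁,γ₁,γ₂,γ₃)`, 15-term Lobachevsky formula. -/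
noncomputable def V6 (a12 a23 a31 g1 g2 g3 : ℝ) : ℝ :=
  (lob g1 + lob g2 + lob g3
    + lob ((π + a31 - a12 - g1) / 2) + lob ((π + a12 - a23 - g2) / 2)
    + lob ((π + a23 - a31 - g3) / 2)
    + lob ((π - a31 + a12 - g1) / 2) + lob ((π - a12 + a23 - g2) / 2)
    + lob ((π - a23 + a31 - g3) / 2)
    + lob ((π + a31 + a12 - g1) / 2) + lob ((π + a12 + a23 - g2) / 2)
    + lob ((π + a23 + a31 - g3) / 2)
    + lob ((π - a31 - a12 - g1) / 2) + lob ((π - a12 - a23 - g2) / 2)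
    + lob ((π - a23 - a31 - g3) / 2)) / 2

/-- `V` as a function on ℝ⁶; coordinates `0,1,2,3,4,5` are `α₁₂,α₂₃,α₃₁,γ₁,γ₂,γ₃`. -/
noncomputable def VV (p : Fin 6 → ℝ) : ℝ :=
  V6 (p 0) (p 1) (p 2) (p 3) (p 4) (p 5)

/-- The set Δ ⊂ ℝ⁶. -/
def D6 : Set (Fin 6 → ℝ) :=
  {p | (∀ i, 0 < p i) ∧ p 3 + p 4 + p 5 = π ∧
    p 3 + p 0 + p 2 < π ∧ p 4 + p 1 + p 0 < π ∧ p 5 + p 2 + p 1 < π}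

/-- The closure Δ̄ ⊂ ℝ⁶. -/
def D6bar : Set (Fin 6 → ℝ) :=
  {p | (∀ i, 0 ≤ p i) ∧ p 3 + p 4 + p 5 = π ∧
    p 3 + p 0 + p 2 ≤ π ∧ p 4 + p 1 + p 0 ≤ π ∧ p 5 + p 2 + p 1 ≤ π}

/-- The five associated ideal-tetrahedron angle triples of a point of ℝ⁶. -/
noncomputable def fiveTriples (p : Fin 6 → ℝ) : List (List ℝ) :=
  [ [(π + p 2 - p 0 - p 3) / 2, (π + p 0 - p 1 - p 4) / 2, (π + p 1 - p 2 - p 5) / 2],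
    [(π - p 2 + p 0 - p 3) / 2, (π - p 0 + p 1 - p 4) / 2, (π - p 1 + p 2 - p 5) / 2],
    [p 3, (π + p 2 + p 0 - p 3) / 2, (π - p 2 - p 0 - p 3) / 2],
    [p 4, (π + p 0 + p 1 - p 4) / 2, (π - p 0 - p 1 - p 4) / 2],
    [p 5, (π + p 1 + p 2 - p 5) / 2, (π - p 1 - p 2 - p 5) / 2] ]

/-- A triple is mildly degenerate: a permutation of `(0,β,π−β)` with `0 < β < π`. -/
def IsMildTriple (l : List ℝ) : Prop :=
  ∃ β : ℝ, 0 < β ∧ β < π ∧ l.Perm [0, β, π - β]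

private noncomputable def seg (x y t : ℝ) : ℝ := (1 - t) * x + t * y

private noncomputable def gg (x y t : ℝ) : ℝ := -Real.log (2 * Real.sin (seg x y t)) * (y - x)

private lemma neg_log_le_rpow {t : ℝ} (ht : 0 < t) : -Real.log t ≤ 2 * t ^ (-(1:ℝ)/2) := by
  have hs : (0:ℝ) < t ^ (-(1:ℝ)/2) := Real.rpow_pos_of_pos ht _
  have h1 : Real.log (t ^ (-(1:ℝ)/2)) = (-(1:ℝ)/2) * Real.log t := Real.log_rpow ht _
  have h2 : Real.log (t ^ (-(1:ℝ)/2)) ≤ t ^ (-(1:ℝ)/2) - 1 := Real.log_le_sub_one_of_pos hs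
  nlinarith

private lemma sin_chord {x t : ℝ} (hx : x < π) (ht : 0 < t) (htx : t ≤ x) :
    Real.sin x / x * t ≤ Real.sin t := by
  have hx0 : 0 < x := lt_of_lt_of_le ht htx
  have ha : (0:ℝ) ≤ 1 - t/x := by
    rw [sub_nonneg]; exact div_le_one_of_le₀ htx hx0.le
  have hb : (0:ℝ) ≤ t/x := by positivity
  have hab : (1 - t/x) + t/x = 1 := by ring
  have h := strictConcaveOn_sin_Icc.concaveOn.2
      (Set.mem_Icc.2 ⟨le_rfl, Real.pi_pos.le⟩) (Set.mem_Icc.2 ⟨hx0.le, hx.le⟩)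
      ha hb hab
  have hxx : (1 - t/x) • (0:ℝ) + (t/x) • x = t := by
    simp only [smul_eq_mul, mul_zero, zero_add]
    field_simp [hx0.ne']
  rw [hxx, Real.sin_zero] at h
  have : (t/x) • Real.sin x = Real.sin x / x * t := by
    rw [smul_eq_mul]; ring
  rw [this] at h
  simpa using h

private lemma integrable_log_two_sin {x : ℝ} (hx0 : 0 < x) (hxpi : x < π) :
    IntervalIntegrable (fun t => Real.log |2 * Real.sin t|) volume 0 x := by
  have hsinx : 0 < Real.sin x := Real.sin_pos_of_pos_of_lt_pi hx0 hxpi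
  set C : ℝ := |Real.log 2 + Real.log π| + |Real.log (2 * (Real.sin x / x))| with hC
  have hC0 : 0 ≤ C := by positivity
  have hg : IntervalIntegrable (fun t => C + 2 * t ^ (-(1:ℝ)/2)) volume 0 x :=
    intervalIntegrable_const.add
      ((intervalIntegral.intervalIntegrable_rpow' (by norm_num)).const_mul 2)
  refine hg.mono_fun ?_ ?_
  · exact ((Real.measurable_log.comp
      ((measurable_const.mul Real.measurable_sin).abs)).aestronglyMeasurable)
  · filter_upwards [MeasureTheory.self_mem_ae_restrict measurableSet_uIoc] with t ht
    rw [Set.uIoc_of_le hx0.le] at ht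
    obtain ⟨ht0, htx⟩ := ht
    have hsint : 0 < Real.sin t :=
      Real.sin_pos_of_pos_of_lt_pi ht0 (lt_of_le_of_lt htx hxpi)
    have habs : |2 * Real.sin t| = 2 * Real.sin t := abs_of_pos (by positivity)
    have hrp : (0:ℝ) < t ^ (-(1:ℝ)/2) := Real.rpow_pos_of_pos ht0 _
    have hupper : Real.log (2 * Real.sin t) ≤ Real.log 2 + Real.log π := by
      have h1 : Real.log (2 * Real.sin t) ≤ Real.log (2 * t) := by
        apply Real.log_le_log (by positivity)
        have := Real.sin_lt ht0
        linarith
      rw [Real.log_mul (by norm_num) (ne_of_gt ht0)] at h1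
      have h2 : Real.log t ≤ Real.log π :=
        Real.log_le_log ht0 (le_of_lt (lt_of_le_of_lt htx hxpi))
      linarith
    have hlower : Real.log (2 * (Real.sin x / x)) + Real.log t ≤ Real.log (2 * Real.sin t) := by
      have hc : 0 < Real.sin x / x := by positivity
      have h1 : Real.log (2 * (Real.sin x / x * t)) ≤ Real.log (2 * Real.sin t) := by
        apply Real.log_le_log (by positivity)
        have := sin_chord hxpi ht0 htx
        linarith
      calc Real.log (2 * (Real.sin x / x)) + Real.log t
          = Real.log (2 * (Real.sin x / x) * t) := by
            rw [Real.log_mul (by positivity) (ne_of_gt ht0)]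
        _ = Real.log (2 * (Real.sin x / x * t)) := by ring_nf
        _ ≤ Real.log (2 * Real.sin t) := h1
    have hnl : -Real.log t ≤ 2 * t ^ (-(1:ℝ)/2) := neg_log_le_rpow ht0
    rw [Real.norm_eq_abs, Real.norm_eq_abs, habs,
      abs_of_nonneg (show (0:ℝ) ≤ C + 2 * t ^ (-(1:ℝ)/2) by positivity), abs_le]
    have e1 := le_abs_self (Real.log 2 + Real.log π)
    have e2 := neg_abs_le (Real.log (2 * (Real.sin x / x)))
    have e3 := abs_nonneg (Real.log 2 + Real.log π)
    have e4 := abs_nonneg (Real.log (2 * (Real.sin x / x)))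
    constructor
    · simp only [hC]; linarith
    · simp only [hC]; linarith

private lemma lob_hasDerivAt {x : ℝ} (hx0 : 0 < x) (hxpi : x < π) :
    HasDerivAt lob (-Real.log (2 * Real.sin x)) x := by
  have hsin : 0 < Real.sin x := Real.sin_pos_of_pos_of_lt_pi hx0 hxpi
  have hne : |2 * Real.sin x| ≠ 0 := by positivity
  have hcont : ContinuousAt (fun t => Real.log |2 * Real.sin t|) x :=
    (((continuous_const.mul Real.continuous_sin).abs).continuousAt).log hne
  have hmeas : StronglyMeasurableAtFilter (fun t => Real.log |2 * Real.sin t|) (𝓝 x) :=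
    ((Real.measurable_log.comp
      ((measurable_const.mul Real.measurable_sin).abs)).stronglyMeasurable).stronglyMeasurableAtFilter
  have h := (intervalIntegral.integral_hasDerivAt_right
      (integrable_log_two_sin hx0 hxpi) hmeas hcont).neg
  have he : Real.log |2 * Real.sin x| = Real.log (2 * Real.sin x) := by
    rw [abs_of_pos (by positivity)]
  rw [he] at h
  exact h

private lemma seg_hasDerivAt (x y t : ℝ) : HasDerivAt (fun s => seg x y s) (y - x) t := by
  have h : HasDerivAt (fun s : ℝ => (1 - s) * x + s * y) ((0 - 1) * x + 1 * y) t :=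
    (((hasDerivAt_const t (1:ℝ)).sub (hasDerivAt_id t)).mul_const x).add
      ((hasDerivAt_id t).mul_const y)
  have h2 : (0 - 1) * x + 1 * y = y - x := by ring
  rw [h2] at h
  exact h

private lemma seg_mem {x y t : ℝ} (hx : x ∈ Icc 0 π) (hy : y ∈ Ioo 0 π)
    (ht : t ∈ Ioo (0:ℝ) 1) : seg x y t ∈ Ioo 0 π := by
  obtain ⟨hx0, hxp⟩ := hx; obtain ⟨hy0, hyp⟩ := hy; obtain ⟨ht0, ht1⟩ := ht
  unfold seg
  constructor
  · nlinarith
  · nlinarith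

private lemma term_hasDerivAt {x y t : ℝ} (hx : x ∈ Icc 0 π) (hy : y ∈ Ioo 0 π)
    (ht : t ∈ Ioo (0:ℝ) 1) :
    HasDerivAt (fun s => lob (seg x y s)) (gg x y t) t := by
  obtain ⟨h0, hp⟩ := seg_mem hx hy ht
  exact (lob_hasDerivAt h0 hp).comp t (seg_hasDerivAt x y t)

private lemma seg_continuous (x y : ℝ) : Continuous (fun t => seg x y t) := by
  unfold seg; fun_prop

private lemma gg_conv {x y : ℝ} (hx : x ∈ Ioo 0 π) :
    ∃ L, Tendsto (fun t => gg x y t) (𝓝[>] (0:ℝ)) (𝓝 L) := by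
  refine ⟨gg x y 0, ?_⟩
  have hseg0 : seg x y 0 = x := by unfold seg; ring
  have hne : (2 : ℝ) * Real.sin (seg x y 0) ≠ 0 := by
    rw [hseg0]
    have := Real.sin_pos_of_pos_of_lt_pi hx.1 hx.2
    positivity
  have hc : ContinuousAt (fun t => gg x y t) 0 := by
    unfold gg
    exact (((continuous_const.mul
      (Real.continuous_sin.comp (seg_continuous x y))).continuousAt.log hne).neg).mul
      continuousAt_const
  exact hc.tendsto.mono_left nhdsWithin_le_nhds

private lemma gg_atTop {y : ℝ} (hy : y ∈ Ioo 0 π) :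
    Tendsto (fun t => gg 0 y t) (𝓝[>] (0:ℝ)) atTop := by
  have hmem : Ioo (0:ℝ) 1 ∈ 𝓝[>] (0:ℝ) := Ioo_mem_nhdsGT one_pos
  have h1 : Tendsto (fun t => 2 * Real.sin (seg 0 y t)) (𝓝[>] (0:ℝ)) (𝓝[>] (0:ℝ)) := by
    apply tendsto_nhdsWithin_of_tendsto_nhds_of_eventually_within
    · have hc : ContinuousAt (fun t => 2 * Real.sin (seg 0 y t)) 0 :=
        (continuous_const.mul (Real.continuous_sin.comp (seg_continuous 0 y))).continuousAt
      have h0 : (2:ℝ) * Real.sin (seg 0 y 0) = 0 := by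
        have : seg 0 y 0 = 0 := by unfold seg; ring
        simp [this]
      have := hc.tendsto
      rw [h0] at this
      exact this.mono_left nhdsWithin_le_nhds
    · filter_upwards [hmem] with t ht
      have hs : seg 0 y t ∈ Ioo 0 π := seg_mem ⟨le_rfl, Real.pi_pos.le⟩ hy ht
      have := Real.sin_pos_of_pos_of_lt_pi hs.1 hs.2
      exact Set.mem_Ioi.2 (by positivity)
  have h2 : Tendsto (fun t => Real.log (2 * Real.sin (seg 0 y t))) (𝓝[>] (0:ℝ)) atBot :=
    Real.tendsto_log_nhdsGT_zero.comp h1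
  have h3 : Tendsto (fun t => -Real.log (2 * Real.sin (seg 0 y t))) (𝓝[>] (0:ℝ)) atTop :=
    tendsto_neg_atBot_atTop.comp h2
  have h4 := h3.atTop_mul_const (show (0:ℝ) < y - 0 by simpa using hy.1)
  exact h4

private lemma phi_tendsto {a : ℝ} (ha : 0 < a) :
    Tendsto (fun t => Real.log (2 * Real.sin (a * t)) - Real.log t) (𝓝[>] (0:ℝ))
      (𝓝 (Real.log (2 * a))) := by
  have hslope : Tendsto (fun u => Real.sin u / u) (𝓝[≠] (0:ℝ)) (𝓝 1) := by
    have h := Real.hasDerivAt_sin 0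
    rw [hasDerivAt_iff_tendsto_slope] at h
    have hs : slope Real.sin 0 = fun u => Real.sin u / u := by
      funext u
      rw [slope_def_field]
      simp
    rw [hs, Real.cos_zero] at h
    exact h
  have hmap : Tendsto (fun t => a * t) (𝓝[>] (0:ℝ)) (𝓝[≠] (0:ℝ)) := by
    apply tendsto_nhdsWithin_of_tendsto_nhds_of_eventually_within
    · have hcont : Continuous (fun t : ℝ => a * t) := continuous_const.mul continuous_id
      have h0 := hcont.tendsto 0
      rw [mul_zero] at h0
      exact h0.mono_left nhdsWithin_le_nhds
    · filter_upwards [self_mem_nhdsWithin] with t ht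
      have htt : (0:ℝ) < t := ht
      have : a * t ≠ 0 := ne_of_gt (mul_pos ha htt)
      simpa using this
  have h1 : Tendsto (fun t => Real.sin (a * t) / (a * t)) (𝓝[>] (0:ℝ)) (𝓝 1) :=
    hslope.comp hmap
  have h2 : Tendsto (fun t => 2 * a * (Real.sin (a * t) / (a * t))) (𝓝[>] (0:ℝ))
      (𝓝 (2 * a)) := by
    have := h1.const_mul (2 * a)
    simpa using this
  have h3 : Tendsto (fun t => 2 * Real.sin (a * t) / t) (𝓝[>] (0:ℝ)) (𝓝 (2 * a)) := by
    apply h2.congr'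
    filter_upwards [self_mem_nhdsWithin] with t ht
    have ht0 : t ≠ 0 := ne_of_gt ht
    field_simp
  have h4 : Tendsto (fun t => Real.log (2 * Real.sin (a * t) / t)) (𝓝[>] (0:ℝ))
      (𝓝 (Real.log (2 * a))) :=
    ((Real.continuousAt_log (by positivity)).tendsto).comp h3
  apply h4.congr'
  filter_upwards [Ioo_mem_nhdsGT (show (0:ℝ) < π / a by positivity)] with t ht
  have ht0 : 0 < t := ht.1
  have hat : 0 < a * t := by positivity
  have hatpi : a * t < π := by
    have := ht.2
    calc a * t < a * (π / a) := by exact (mul_lt_mul_iff_right₀ ha).2 this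
    _ = π := by field_simp
  have hsin : 0 < Real.sin (a * t) := Real.sin_pos_of_pos_of_lt_pi hat hatpi
  rw [Real.log_div (by positivity) (ne_of_gt ht0)]

private lemma triple_pi_conv {y1 y2 y3 : ℝ} (hy1 : y1 ∈ Ioo 0 π) (hy2 : y2 ∈ Ioo 0 π)
    (hy3 : y3 ∈ Ioo 0 π) (hsy : y1 + y2 + y3 = π) :
    ∃ L, Tendsto (fun t => gg 0 y1 t + gg 0 y2 t + gg π y3 t) (𝓝[>] (0:ℝ)) (𝓝 L) := by
  have e : ∀ t, gg 0 y1 t + gg 0 y2 t + gg π y3 t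
      = -(Real.log (2 * Real.sin (y1 * t)) - Real.log t) * y1
        + -(Real.log (2 * Real.sin (y2 * t)) - Real.log t) * y2
        + (Real.log (2 * Real.sin ((y1 + y2) * t)) - Real.log t) * (y1 + y2) := by
    intro t
    have hy3e : y3 = π - y1 - y2 := by linarith
    subst hy3e
    have h3 : seg π (π - y1 - y2) t = π - (y1 + y2) * t := by unfold seg; ring
    have h1 : seg 0 y1 t = y1 * t := by unfold seg; ring
    have h2 : seg 0 y2 t = y2 * t := by unfold seg; ring
    unfold gg
    rw [h3, Real.sin_pi_sub, h1, h2]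
    ring
  have p1 := phi_tendsto hy1.1
  have p2 := phi_tendsto hy2.1
  have p12 := phi_tendsto (add_pos hy1.1 hy2.1)
  refine ⟨_, Tendsto.congr (fun t => (e t).symm)
    (((p1.neg.mul_const y1).add (p2.neg.mul_const y2)).add (p12.mul_const (y1 + y2)))⟩

private lemma tendsto_atTop_add_conv {α : Type*} {l : Filter α} {f g : α → ℝ} {c : ℝ}
    (hf : Tendsto f l atTop) (hg : Tendsto g l (𝓝 c)) :
    Tendsto (fun t => f t + g t) l atTop := by
  have h1 : ∀ᶠ t in l, c - 1 < g t := hg.eventually (eventually_gt_nhds (by linarith))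
  apply tendsto_atTop_mono' l
    (h1.mono fun t ht => show f t + (c - 1) ≤ f t + g t by linarith)
  exact tendsto_atTop_add_const_right l (c - 1) hf

private lemma disj_add_disj {f g : ℝ → ℝ}
    (hf : Tendsto f (𝓝[>] (0:ℝ)) atTop ∨ ∃ L, Tendsto f (𝓝[>] (0:ℝ)) (𝓝 L))
    (hg : Tendsto g (𝓝[>] (0:ℝ)) atTop ∨ ∃ L, Tendsto g (𝓝[>] (0:ℝ)) (𝓝 L)) :
    Tendsto (fun t => f t + g t) (𝓝[>] (0:ℝ)) atTop ∨
      ∃ L, Tendsto (fun t => f t + g t) (𝓝[>] (0:ℝ)) (𝓝 L) := by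
  rcases hf with hf | ⟨L1, hf⟩ <;> rcases hg with hg | ⟨L2, hg⟩
  · exact Or.inl (Tendsto.atTop_add_atTop hf hg)
  · exact Or.inl (tendsto_atTop_add_conv hf hg)
  · exact Or.inl ((tendsto_atTop_add_conv hg hf).congr fun t => add_comm _ _)
  · exact Or.inr ⟨L1 + L2, hf.add hg⟩

private lemma atTop_add_disj {f g : ℝ → ℝ}
    (hf : Tendsto f (𝓝[>] (0:ℝ)) atTop)
    (hg : Tendsto g (𝓝[>] (0:ℝ)) atTop ∨ ∃ L, Tendsto g (𝓝[>] (0:ℝ)) (𝓝 L)) :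
    Tendsto (fun t => f t + g t) (𝓝[>] (0:ℝ)) atTop := by
  rcases hg with hg | ⟨L, hg⟩
  · exact Tendsto.atTop_add_atTop hf hg
  · exact tendsto_atTop_add_conv hf hg

private lemma disj_add_atTop {f g : ℝ → ℝ}
    (hf : Tendsto f (𝓝[>] (0:ℝ)) atTop ∨ ∃ L, Tendsto f (𝓝[>] (0:ℝ)) (𝓝 L))
    (hg : Tendsto g (𝓝[>] (0:ℝ)) atTop) :
    Tendsto (fun t => f t + g t) (𝓝[>] (0:ℝ)) atTop := by
  rcases hf with hf | ⟨L, hf⟩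
  · exact Tendsto.atTop_add_atTop hf hg
  · exact (tendsto_atTop_add_conv hg hf).congr fun t => add_comm _ _

private lemma triple_mild_atTop {x2 x3 y1 y2 y3 : ℝ} (hy1 : y1 ∈ Ioo 0 π)
    (hx2 : x2 ∈ Ioo 0 π) (hx3 : x3 ∈ Ioo 0 π) :
    Tendsto (fun t => gg 0 y1 t + gg x2 y2 t + gg x3 y3 t) (𝓝[>] (0:ℝ)) atTop := by
  obtain ⟨L2, h2⟩ := gg_conv (y := y2) hx2
  obtain ⟨L3, h3⟩ := gg_conv (y := y3) hx3
  exact tendsto_atTop_add_conv (tendsto_atTop_add_conv (gg_atTop hy1) h2) h3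

private lemma triple_good {x1 x2 x3 y1 y2 y3 : ℝ}
    (hx1 : x1 ∈ Icc 0 π) (hx2 : x2 ∈ Icc 0 π) (hx3 : x3 ∈ Icc 0 π)
    (hsx : x1 + x2 + x3 = π)
    (hy1 : y1 ∈ Ioo 0 π) (hy2 : y2 ∈ Ioo 0 π) (hy3 : y3 ∈ Ioo 0 π)
    (hsy : y1 + y2 + y3 = π) :
    Tendsto (fun t => gg x1 y1 t + gg x2 y2 t + gg x3 y3 t) (𝓝[>] (0:ℝ)) atTop ∨
      ∃ L, Tendsto (fun t => gg x1 y1 t + gg x2 y2 t + gg x3 y3 t) (𝓝[>] (0:ℝ)) (𝓝 L) := by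
  rcases hx1.1.eq_or_lt with h1 | h1 <;> rcases hx2.1.eq_or_lt with h2 | h2 <;>
    rcases hx3.1.eq_or_lt with h3 | h3
  · exfalso; have := Real.pi_pos; linarith
  · -- x1 = 0, x2 = 0, 0 < x3 : x3 = π
    rw [← h1, ← h2]
    have hx3e : x3 = π := by linarith
    rw [hx3e]
    exact Or.inr (triple_pi_conv hy1 hy2 hy3 hsy)
  · -- x1 = 0, 0 < x2, x3 = 0 : x2 = π
    rw [← h1, ← h3]
    have hx2e : x2 = π := by linarith
    rw [hx2e]
    obtain ⟨L, hL⟩ := triple_pi_conv hy1 hy3 hy2 (by linarith)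
    exact Or.inr ⟨L, hL.congr fun t => by ring⟩
  · -- x1 = 0, 0 < x2, 0 < x3 : mild
    rw [← h1]
    exact Or.inl (triple_mild_atTop hy1 ⟨h2, by linarith⟩ ⟨h3, by linarith⟩)
  · -- 0 < x1, x2 = 0, x3 = 0 : x1 = π
    rw [← h2, ← h3]
    have hx1e : x1 = π := by linarith
    rw [hx1e]
    obtain ⟨L, hL⟩ := triple_pi_conv hy2 hy3 hy1 (by linarith)
    exact Or.inr ⟨L, hL.congr fun t => by ring⟩
  · -- 0 < x1, x2 = 0, 0 < x3
    rw [← h2]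
    exact Or.inl ((triple_mild_atTop hy2 ⟨h1, by linarith⟩ ⟨h3, by linarith⟩
      (y2 := y1) (y3 := y3)).congr fun t => by ring)
  · -- 0 < x1, 0 < x2, x3 = 0
    rw [← h3]
    exact Or.inl ((triple_mild_atTop hy3 ⟨h1, by linarith⟩ ⟨h2, by linarith⟩
      (y2 := y1) (y3 := y2)).congr fun t => by ring)
  · -- all interior
    obtain ⟨L1, c1⟩ := gg_conv (y := y1) ⟨h1, by linarith⟩
    obtain ⟨L2, c2⟩ := gg_conv (y := y2) ⟨h2, by linarith⟩
    obtain ⟨L3, c3⟩ := gg_conv (y := y3) ⟨h3, by linarith⟩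
    exact Or.inr ⟨L1 + L2 + L3, (c1.add c2).add c3⟩

private lemma perm_pair {a b c d : ℝ} (h : [a, b].Perm [c, d]) :
    (a = c ∧ b = d) ∨ (a = d ∧ b = c) := by
  have ha : a ∈ [c, d] := h.mem_iff.1 (by simp)
  simp only [List.mem_cons, List.not_mem_nil, or_false, List.mem_singleton] at ha
  rcases ha with rfl | rfl
  · left
    refine ⟨rfl, ?_⟩
    have hb : b ∈ [d] := (h.cons_inv).mem_iff.1 (by simp)
    simpa using hb
  · right
    refine ⟨rfl, ?_⟩
    have hsw : ([c, a] : List ℝ).Perm [a, c] := List.Perm.swap a c []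
    have hb : b ∈ [c] := ((h.trans hsw).cons_inv).mem_iff.1 (by simp)
    simpa using hb

private lemma mild_cases {e1 e2 e3 β : ℝ} (hβ0 : 0 < β) (hβπ : β < π)
    (h : [e1, e2, e3].Perm [0, β, π - β]) :
    (e1 = 0 ∧ e2 ∈ Ioo 0 π ∧ e3 ∈ Ioo 0 π) ∨
    (e2 = 0 ∧ e1 ∈ Ioo 0 π ∧ e3 ∈ Ioo 0 π) ∨
    (e3 = 0 ∧ e1 ∈ Ioo 0 π ∧ e2 ∈ Ioo 0 π) := by
  have hβm : β ∈ Ioo 0 π := ⟨hβ0, hβπ⟩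
  have hπβ : π - β ∈ Ioo 0 π := ⟨by linarith, by linarith⟩
  have h0 : (0:ℝ) ∈ [e1, e2, e3] := h.mem_iff.2 (by simp)
  simp only [List.mem_cons, List.not_mem_nil, or_false, List.mem_singleton] at h0
  rcases h0 with h0 | h0 | h0
  · left
    refine ⟨h0.symm, ?_⟩
    rw [h0] at h
    rcases perm_pair h.cons_inv with ⟨ha, hb⟩ | ⟨ha, hb⟩ <;> rw [ha, hb]
    · exact ⟨hβm, hπβ⟩
    · exact ⟨hπβ, hβm⟩
  · right; left
    refine ⟨h0.symm, ?_⟩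
    rw [← h0] at h
    have hsw : ([0, e1, e3] : List ℝ).Perm [e1, 0, e3] := List.Perm.swap e1 0 [e3]
    rcases perm_pair (hsw.trans h).cons_inv with ⟨ha, hb⟩ | ⟨ha, hb⟩ <;> rw [ha, hb]
    · exact ⟨hβm, hπβ⟩
    · exact ⟨hπβ, hβm⟩
  · right; right
    refine ⟨h0.symm, ?_⟩
    rw [← h0] at h
    have hsw1 : ([0, e1, e2] : List ℝ).Perm [e1, 0, e2] := List.Perm.swap e1 0 [e2]
    have hsw2 : ([e1, 0, e2] : List ℝ).Perm [e1, e2, 0] := List.Perm.cons e1 (List.Perm.swap e2 0 [])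
    rcases perm_pair ((hsw1.trans (hsw2.trans h))).cons_inv with ⟨ha, hb⟩ | ⟨ha, hb⟩ <;> rw [ha, hb]
    · exact ⟨hβm, hπβ⟩
    · exact ⟨hπβ, hβm⟩

set_option maxHeartbeats 2000000 in
theorem V_mildly_degenerate_boundary_derivative (p : Fin 6 → ℝ)
    (hbar : p ∈ D6bar) (hni : p ∉ D6)
    (hmild : ∃ l ∈ fiveTriples p, IsMildTriple l)
    (q : Fin 6 → ℝ) (hq : q ∈ D6) :
    (∀ t ∈ Set.Ioo (0:ℝ) 1,
      DifferentiableAt ℝ (fun t : ℝ => VV ((1 - t) • p + t • q)) t) ∧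
    Tendsto (deriv (fun t : ℝ => VV ((1 - t) • p + t • q)))
      (nhdsWithin 0 (Set.Ioi 0)) atTop := by
  obtain ⟨hp0, hpsum, hpa, hpb, hpc⟩ := hbar
  obtain ⟨hq0, hqsum, hqa, hqb, hqc⟩ := hq
  have P0 := hp0 0; have P1 := hp0 1; have P2 := hp0 2
  have P3 := hp0 3; have P4 := hp0 4; have P5 := hp0 5
  have Q0 := hq0 0; have Q1 := hq0 1; have Q2 := hq0 2
  have Q3 := hq0 3; have Q4 := hq0 4; have Q5 := hq0 5
  have hπ := Real.pi_pos
  have hx00 : ((π + p 2 - p 0 - p 3) / 2) ∈ Icc 0 π := by rw [Set.mem_Icc]; constructor <;> linarith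
  have hy00 : ((π + q 2 - q 0 - q 3) / 2) ∈ Ioo 0 π := by rw [Set.mem_Ioo]; constructor <;> linarith
  have hx01 : ((π + p 0 - p 1 - p 4) / 2) ∈ Icc 0 π := by rw [Set.mem_Icc]; constructor <;> linarith
  have hy01 : ((π + q 0 - q 1 - q 4) / 2) ∈ Ioo 0 π := by rw [Set.mem_Ioo]; constructor <;> linarith
  have hx02 : ((π + p 1 - p 2 - p 5) / 2) ∈ Icc 0 π := by rw [Set.mem_Icc]; constructor <;> linarith
  have hy02 : ((π + q 1 - q 2 - q 5) / 2) ∈ Ioo 0 π := by rw [Set.mem_Ioo]; constructor <;> linarith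
  have hx10 : ((π - p 2 + p 0 - p 3) / 2) ∈ Icc 0 π := by rw [Set.mem_Icc]; constructor <;> linarith
  have hy10 : ((π - q 2 + q 0 - q 3) / 2) ∈ Ioo 0 π := by rw [Set.mem_Ioo]; constructor <;> linarith
  have hx11 : ((π - p 0 + p 1 - p 4) / 2) ∈ Icc 0 π := by rw [Set.mem_Icc]; constructor <;> linarith
  have hy11 : ((π - q 0 + q 1 - q 4) / 2) ∈ Ioo 0 π := by rw [Set.mem_Ioo]; constructor <;> linarith
  have hx12 : ((π - p 1 + p 2 - p 5) / 2) ∈ Icc 0 π := by rw [Set.mem_Icc]; constructor <;> linarith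
  have hy12 : ((π - q 1 + q 2 - q 5) / 2) ∈ Ioo 0 π := by rw [Set.mem_Ioo]; constructor <;> linarith
  have hx20 : (p 3) ∈ Icc 0 π := by rw [Set.mem_Icc]; constructor <;> linarith
  have hy20 : (q 3) ∈ Ioo 0 π := by rw [Set.mem_Ioo]; constructor <;> linarith
  have hx21 : ((π + p 2 + p 0 - p 3) / 2) ∈ Icc 0 π := by rw [Set.mem_Icc]; constructor <;> linarith
  have hy21 : ((π + q 2 + q 0 - q 3) / 2) ∈ Ioo 0 π := by rw [Set.mem_Ioo]; constructor <;> linarith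
  have hx22 : ((π - p 2 - p 0 - p 3) / 2) ∈ Icc 0 π := by rw [Set.mem_Icc]; constructor <;> linarith
  have hy22 : ((π - q 2 - q 0 - q 3) / 2) ∈ Ioo 0 π := by rw [Set.mem_Ioo]; constructor <;> linarith
  have hx30 : (p 4) ∈ Icc 0 π := by rw [Set.mem_Icc]; constructor <;> linarith
  have hy30 : (q 4) ∈ Ioo 0 π := by rw [Set.mem_Ioo]; constructor <;> linarith
  have hx31 : ((π + p 0 + p 1 - p 4) / 2) ∈ Icc 0 π := by rw [Set.mem_Icc]; constructor <;> linarith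
  have hy31 : ((π + q 0 + q 1 - q 4) / 2) ∈ Ioo 0 π := by rw [Set.mem_Ioo]; constructor <;> linarith
  have hx32 : ((π - p 0 - p 1 - p 4) / 2) ∈ Icc 0 π := by rw [Set.mem_Icc]; constructor <;> linarith
  have hy32 : ((π - q 0 - q 1 - q 4) / 2) ∈ Ioo 0 π := by rw [Set.mem_Ioo]; constructor <;> linarith
  have hx40 : (p 5) ∈ Icc 0 π := by rw [Set.mem_Icc]; constructor <;> linarith
  have hy40 : (q 5) ∈ Ioo 0 π := by rw [Set.mem_Ioo]; constructor <;> linarith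
  have hx41 : ((π + p 1 + p 2 - p 5) / 2) ∈ Icc 0 π := by rw [Set.mem_Icc]; constructor <;> linarith
  have hy41 : ((π + q 1 + q 2 - q 5) / 2) ∈ Ioo 0 π := by rw [Set.mem_Ioo]; constructor <;> linarith
  have hx42 : ((π - p 1 - p 2 - p 5) / 2) ∈ Icc 0 π := by rw [Set.mem_Icc]; constructor <;> linarith
  have hy42 : ((π - q 1 - q 2 - q 5) / 2) ∈ Ioo 0 π := by rw [Set.mem_Ioo]; constructor <;> linarith
  have hF : (fun t : ℝ => VV ((1 - t) • p + t • q)) = fun t =>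
      (lob (seg (p 3) (q 3) t)
        + lob (seg (p 4) (q 4) t)
        + lob (seg (p 5) (q 5) t)
        + lob (seg ((π + p 2 - p 0 - p 3) / 2) ((π + q 2 - q 0 - q 3) / 2) t)
        + lob (seg ((π + p 0 - p 1 - p 4) / 2) ((π + q 0 - q 1 - q 4) / 2) t)
        + lob (seg ((π + p 1 - p 2 - p 5) / 2) ((π + q 1 - q 2 - q 5) / 2) t)
        + lob (seg ((π - p 2 + p 0 - p 3) / 2) ((π - q 2 + q 0 - q 3) / 2) t)
        + lob (seg ((π - p 0 + p 1 - p 4) / 2) ((π - q 0 + q 1 - q 4) / 2) t)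
        + lob (seg ((π - p 1 + p 2 - p 5) / 2) ((π - q 1 + q 2 - q 5) / 2) t)
        + lob (seg ((π + p 2 + p 0 - p 3) / 2) ((π + q 2 + q 0 - q 3) / 2) t)
        + lob (seg ((π + p 0 + p 1 - p 4) / 2) ((π + q 0 + q 1 - q 4) / 2) t)
        + lob (seg ((π + p 1 + p 2 - p 5) / 2) ((π + q 1 + q 2 - q 5) / 2) t)
        + lob (seg ((π - p 2 - p 0 - p 3) / 2) ((π - q 2 - q 0 - q 3) / 2) t)
        + lob (seg ((π - p 0 - p 1 - p 4) / 2) ((π - q 0 - q 1 - q 4) / 2) t)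
        + lob (seg ((π - p 1 - p 2 - p 5) / 2) ((π - q 1 - q 2 - q 5) / 2) t)) / 2 := by
    funext t
    have hc : ∀ i, ((1 - t) • p + t • q) i = (1 - t) * p i + t * q i := fun i => by simp
    simp only [VV, V6, hc]
    unfold seg
    ring_nf
  have hasD : ∀ t ∈ Set.Ioo (0:ℝ) 1, HasDerivAt (fun t : ℝ => VV ((1 - t) • p + t • q))
      ((gg (p 3) (q 3) t
        + gg (p 4) (q 4) t
        + gg (p 5) (q 5) t
        + gg ((π + p 2 - p 0 - p 3) / 2) ((π + q 2 - q 0 - q 3) / 2) t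
        + gg ((π + p 0 - p 1 - p 4) / 2) ((π + q 0 - q 1 - q 4) / 2) t
        + gg ((π + p 1 - p 2 - p 5) / 2) ((π + q 1 - q 2 - q 5) / 2) t
        + gg ((π - p 2 + p 0 - p 3) / 2) ((π - q 2 + q 0 - q 3) / 2) t
        + gg ((π - p 0 + p 1 - p 4) / 2) ((π - q 0 + q 1 - q 4) / 2) t
        + gg ((π - p 1 + p 2 - p 5) / 2) ((π - q 1 + q 2 - q 5) / 2) t
        + gg ((π + p 2 + p 0 - p 3) / 2) ((π + q 2 + q 0 - q 3) / 2) t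
        + gg ((π + p 0 + p 1 - p 4) / 2) ((π + q 0 + q 1 - q 4) / 2) t
        + gg ((π + p 1 + p 2 - p 5) / 2) ((π + q 1 + q 2 - q 5) / 2) t
        + gg ((π - p 2 - p 0 - p 3) / 2) ((π - q 2 - q 0 - q 3) / 2) t
        + gg ((π - p 0 - p 1 - p 4) / 2) ((π - q 0 - q 1 - q 4) / 2) t
        + gg ((π - p 1 - p 2 - p 5) / 2) ((π - q 1 - q 2 - q 5) / 2) t) / 2) t := by
    intro t ht
    rw [hF]
    exact (((((((((((((((term_hasDerivAt hx20 hy20 ht).add (term_hasDerivAt hx30 hy30 ht)).add (term_hasDerivAt hx40 hy40 ht)).add (term_hasDerivAt hx00 hy00 ht)).add (term_hasDerivAt hx01 hy01 ht)).add (term_hasDerivAt hx02 hy02 ht)).add (term_hasDerivAt hx10 hy10 ht)).add (term_hasDerivAt hx11 hy11 ht)).add (term_hasDerivAt hx12 hy12 ht)).add (term_hasDerivAt hx21 hy21 ht)).add (term_hasDerivAt hx31 hy31 ht)).add (term_hasDerivAt hx41 hy41 ht)).add (term_hasDerivAt hx22 hy22 ht)).add (term_hasDerivAt hx32 hy32 ht)).add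 (term_hasDerivAt hx42 hy42 ht)).div_const 2
  have hmem : Set.Ioo (0:ℝ) 1 ∈ 𝓝[>] (0:ℝ) := Ioo_mem_nhdsGT one_pos
  have hev : deriv (fun t : ℝ => VV ((1 - t) • p + t • q)) =ᶠ[𝓝[>] (0:ℝ)]
      (fun t => ((gg ((π + p 2 - p 0 - p 3) / 2) ((π + q 2 - q 0 - q 3) / 2) t + gg ((π + p 0 - p 1 - p 4) / 2) ((π + q 0 - q 1 - q 4) / 2) t + gg ((π + p 1 - p 2 - p 5) / 2) ((π + q 1 - q 2 - q 5) / 2) t) + (gg ((π - p 2 + p 0 - p 3) / 2) ((π - q 2 + q 0 - q 3) / 2) t + gg ((π - p 0 + p 1 - p 4) / 2) ((π - q 0 + q 1 - q 4) / 2) t + gg ((π - p 1 + p 2 - p 5) / 2) ((π - q 1 + q 2 - q 5) / 2) t) + (gg (p 3) (q 3) t + gg ((π + p 2 + p 0 - p 3) / 2) ((π + q 2 + q 0 - q 3) / 2) t + gg ((π - p 2 - p 0 - p 3) / 2) ((π - q 2 - q 0 - q 3) / 2) t) + (gg (p 4) (q 4) t + gg ((π + p 0 + p 1 - p 4) / 2)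 ((π + q 0 + q 1 - q 4) / 2) t + gg ((π - p 0 - p 1 - p 4) / 2) ((π - q 0 - q 1 - q 4) / 2) t) + (gg (p 5) (q 5) t + gg ((π + p 1 + p 2 - p 5) / 2) ((π + q 1 + q 2 - q 5) / 2) t + gg ((π - p 1 - p 2 - p 5) / 2) ((π - q 1 - q 2 - q 5) / 2) t)) / 2) := by
    filter_upwards [hmem] with t ht
    rw [(hasD t ht).deriv]
    ring
  refine ⟨fun t ht => (hasD t ht).differentiableAt, ?_⟩
  have D0 := triple_good hx00 hx01 hx02 (by linarith) hy00 hy01 hy02 (by linarith)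
  have D1 := triple_good hx10 hx11 hx12 (by linarith) hy10 hy11 hy12 (by linarith)
  have D2 := triple_good hx20 hx21 hx22 (by linarith) hy20 hy21 hy22 (by linarith)
  have D3 := triple_good hx30 hx31 hx32 (by linarith) hy30 hy31 hy32 (by linarith)
  have D4 := triple_good hx40 hx41 hx42 (by linarith) hy40 hy41 hy42 (by linarith)
  have key : Tendsto (fun t => (gg ((π + p 2 - p 0 - p 3) / 2) ((π + q 2 - q 0 - q 3) / 2) t + gg ((π + p 0 - p 1 - p 4) / 2) ((π + q 0 - q 1 - q 4) / 2) t + gg ((π + p 1 - p 2 - p 5) / 2) ((π + q 1 - q 2 - q 5) / 2) t) + (gg ((π - p 2 + p 0 - p 3) / 2) ((π - q 2 + q 0 - q 3) / 2) t + gg ((π - p 0 + p 1 - p 4) / 2) ((π - q 0 + q 1 - q 4) / 2) t + gg ((π - p 1 + p 2 - p 5) / 2) ((π - q 1 + q 2 - q 5) / 2) t) + (gg (p 3) (q 3) t + gg ((π + p 2 + p 0 - p 3) / 2) ((π + q 2 + q 0 - q 3) / 2) t + gg ((π - p 2 - p 0 - p 3) / 2) ((π - q 2 - q 0 - q 3)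 / 2) t) + (gg (p 4) (q 4) t + gg ((π + p 0 + p 1 - p 4) / 2) ((π + q 0 + q 1 - q 4) / 2) t + gg ((π - p 0 - p 1 - p 4) / 2) ((π - q 0 - q 1 - q 4) / 2) t) + (gg (p 5) (q 5) t + gg ((π + p 1 + p 2 - p 5) / 2) ((π + q 1 + q 2 - q 5) / 2) t + gg ((π - p 1 - p 2 - p 5) / 2) ((π - q 1 - q 2 - q 5) / 2) t)) (𝓝[>] (0:ℝ)) atTop := by
    simp only [fiveTriples, List.mem_cons, List.not_mem_nil, or_false] at hmild
    obtain ⟨l, hl, hml⟩ := hmild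
    rcases hl with hl | hl | hl | hl | hl <;> subst hl <;>
      obtain ⟨β, hβ0, hβπ, hperm⟩ := hml
    -- mild triple 0
    · rcases mild_cases hβ0 hβπ hperm with ⟨h0, hm1, hm2⟩ | ⟨h0, hm1, hm2⟩ | ⟨h0, hm1, hm2⟩
      · have H : Tendsto (fun t => gg ((π + p 2 - p 0 - p 3) / 2) ((π + q 2 - q 0 - q 3) / 2) t + gg ((π + p 0 - p 1 - p 4) / 2) ((π + q 0 - q 1 - q 4) / 2) t + gg ((π + p 1 - p 2 - p 5) / 2) ((π + q 1 - q 2 - q 5) / 2) t) (𝓝[>] (0:ℝ)) atTop := by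
          rw [h0]
          exact triple_mild_atTop hy00 hm1 hm2
        exact atTop_add_disj (atTop_add_disj (atTop_add_disj (atTop_add_disj H D1) D2) D3) D4
      · have H : Tendsto (fun t => gg ((π + p 2 - p 0 - p 3) / 2) ((π + q 2 - q 0 - q 3) / 2) t + gg ((π + p 0 - p 1 - p 4) / 2) ((π + q 0 - q 1 - q 4) / 2) t + gg ((π + p 1 - p 2 - p 5) / 2) ((π + q 1 - q 2 - q 5) / 2) t) (𝓝[>] (0:ℝ)) atTop := by
          rw [h0]
          exact (triple_mild_atTop hy01 hm1 hm2 (y2 := ((π + q 2 - q 0 - q 3) / 2)) (y3 := ((π + q 1 - q 2 - q 5) / 2))).congr fun t => by ring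
        exact atTop_add_disj (atTop_add_disj (atTop_add_disj (atTop_add_disj H D1) D2) D3) D4
      · have H : Tendsto (fun t => gg ((π + p 2 - p 0 - p 3) / 2) ((π + q 2 - q 0 - q 3) / 2) t + gg ((π + p 0 - p 1 - p 4) / 2) ((π + q 0 - q 1 - q 4) / 2) t + gg ((π + p 1 - p 2 - p 5) / 2) ((π + q 1 - q 2 - q 5) / 2) t) (𝓝[>] (0:ℝ)) atTop := by
          rw [h0]
          exact (triple_mild_atTop hy02 hm1 hm2 (y2 := ((π + q 2 - q 0 - q 3) / 2)) (y3 := ((π + q 0 - q 1 - q 4) / 2))).congr fun t => by ring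
        exact atTop_add_disj (atTop_add_disj (atTop_add_disj (atTop_add_disj H D1) D2) D3) D4
    -- mild triple 1
    · rcases mild_cases hβ0 hβπ hperm with ⟨h0, hm1, hm2⟩ | ⟨h0, hm1, hm2⟩ | ⟨h0, hm1, hm2⟩
      · have H : Tendsto (fun t => gg ((π - p 2 + p 0 - p 3) / 2) ((π - q 2 + q 0 - q 3) / 2) t + gg ((π - p 0 + p 1 - p 4) / 2) ((π - q 0 + q 1 - q 4) / 2) t + gg ((π - p 1 + p 2 - p 5) / 2) ((π - q 1 + q 2 - q 5) / 2) t) (𝓝[>] (0:ℝ)) atTop := by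
          rw [h0]
          exact triple_mild_atTop hy10 hm1 hm2
        exact atTop_add_disj (atTop_add_disj (atTop_add_disj (disj_add_atTop (D0) H) D2) D3) D4
      · have H : Tendsto (fun t => gg ((π - p 2 + p 0 - p 3) / 2) ((π - q 2 + q 0 - q 3) / 2) t + gg ((π - p 0 + p 1 - p 4) / 2) ((π - q 0 + q 1 - q 4) / 2) t + gg ((π - p 1 + p 2 - p 5) / 2) ((π - q 1 + q 2 - q 5) / 2) t) (𝓝[>] (0:ℝ)) atTop := by
          rw [h0]
          exact (triple_mild_atTop hy11 hm1 hm2 (y2 := ((π - q 2 + q 0 - q 3) / 2)) (y3 := ((π - q 1 + q 2 - q 5) / 2))).congr fun t => by ring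
        exact atTop_add_disj (atTop_add_disj (atTop_add_disj (disj_add_atTop (D0) H) D2) D3) D4
      · have H : Tendsto (fun t => gg ((π - p 2 + p 0 - p 3) / 2) ((π - q 2 + q 0 - q 3) / 2) t + gg ((π - p 0 + p 1 - p 4) / 2) ((π - q 0 + q 1 - q 4) / 2) t + gg ((π - p 1 + p 2 - p 5) / 2) ((π - q 1 + q 2 - q 5) / 2) t) (𝓝[>] (0:ℝ)) atTop := by
          rw [h0]
          exact (triple_mild_atTop hy12 hm1 hm2 (y2 := ((π - q 2 + q 0 - q 3) / 2)) (y3 := ((π - q 0 + q 1 - q 4) / 2))).congr fun t => by ring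
        exact atTop_add_disj (atTop_add_disj (atTop_add_disj (disj_add_atTop (D0) H) D2) D3) D4
    -- mild triple 2
    · rcases mild_cases hβ0 hβπ hperm with ⟨h0, hm1, hm2⟩ | ⟨h0, hm1, hm2⟩ | ⟨h0, hm1, hm2⟩
      · have H : Tendsto (fun t => gg (p 3) (q 3) t + gg ((π + p 2 + p 0 - p 3) / 2) ((π + q 2 + q 0 - q 3) / 2) t + gg ((π - p 2 - p 0 - p 3) / 2) ((π - q 2 - q 0 - q 3) / 2) t) (𝓝[>] (0:ℝ)) atTop := by
          have H0 := triple_mild_atTop hy20 hm1 hm2 (y2 := (π + q 2 + q 0 - q 3) / 2) (y3 := (π - q 2 - q 0 - q 3) / 2)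
          rw [h0]
          rw [h0] at H0
          exact H0
        exact atTop_add_disj (atTop_add_disj (disj_add_atTop (disj_add_disj (D0) D1) H) D3) D4
      · have H : Tendsto (fun t => gg (p 3) (q 3) t + gg ((π + p 2 + p 0 - p 3) / 2) ((π + q 2 + q 0 - q 3) / 2) t + gg ((π - p 2 - p 0 - p 3) / 2) ((π - q 2 - q 0 - q 3) / 2) t) (𝓝[>] (0:ℝ)) atTop := by
          rw [h0]
          exact (triple_mild_atTop hy21 hm1 hm2 (y2 := (q 3)) (y3 := ((π - q 2 - q 0 - q 3) / 2))).congr fun t => by ring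
        exact atTop_add_disj (atTop_add_disj (disj_add_atTop (disj_add_disj (D0) D1) H) D3) D4
      · have H : Tendsto (fun t => gg (p 3) (q 3) t + gg ((π + p 2 + p 0 - p 3) / 2) ((π + q 2 + q 0 - q 3) / 2) t + gg ((π - p 2 - p 0 - p 3) / 2) ((π - q 2 - q 0 - q 3) / 2) t) (𝓝[>] (0:ℝ)) atTop := by
          rw [h0]
          exact (triple_mild_atTop hy22 hm1 hm2 (y2 := (q 3)) (y3 := ((π + q 2 + q 0 - q 3) / 2))).congr fun t => by ring
        exact atTop_add_disj (atTop_add_disj (disj_add_atTop (disj_add_disj (D0) D1) H) D3) D4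
    -- mild triple 3
    · rcases mild_cases hβ0 hβπ hperm with ⟨h0, hm1, hm2⟩ | ⟨h0, hm1, hm2⟩ | ⟨h0, hm1, hm2⟩
      · have H : Tendsto (fun t => gg (p 4) (q 4) t + gg ((π + p 0 + p 1 - p 4) / 2) ((π + q 0 + q 1 - q 4) / 2) t + gg ((π - p 0 - p 1 - p 4) / 2) ((π - q 0 - q 1 - q 4) / 2) t) (𝓝[>] (0:ℝ)) atTop := by
          have H0 := triple_mild_atTop hy30 hm1 hm2 (y2 := (π + q 0 + q 1 - q 4) / 2) (y3 := (π - q 0 - q 1 - q 4) / 2)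
          rw [h0]
          rw [h0] at H0
          exact H0
        exact atTop_add_disj (disj_add_atTop (disj_add_disj (disj_add_disj (D0) D1) D2) H) D4
      · have H : Tendsto (fun t => gg (p 4) (q 4) t + gg ((π + p 0 + p 1 - p 4) / 2) ((π + q 0 + q 1 - q 4) / 2) t + gg ((π - p 0 - p 1 - p 4) / 2) ((π - q 0 - q 1 - q 4) / 2) t) (𝓝[>] (0:ℝ)) atTop := by
          rw [h0]
          exact (triple_mild_atTop hy31 hm1 hm2 (y2 := (q 4)) (y3 := ((π - q 0 - q 1 - q 4) / 2))).congr fun t => by ring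
        exact atTop_add_disj (disj_add_atTop (disj_add_disj (disj_add_disj (D0) D1) D2) H) D4
      · have H : Tendsto (fun t => gg (p 4) (q 4) t + gg ((π + p 0 + p 1 - p 4) / 2) ((π + q 0 + q 1 - q 4) / 2) t + gg ((π - p 0 - p 1 - p 4) / 2) ((π - q 0 - q 1 - q 4) / 2) t) (𝓝[>] (0:ℝ)) atTop := by
          rw [h0]
          exact (triple_mild_atTop hy32 hm1 hm2 (y2 := (q 4)) (y3 := ((π + q 0 + q 1 - q 4) / 2))).congr fun t => by ring
        exact atTop_add_disj (disj_add_atTop (disj_add_disj (disj_add_disj (D0) D1) D2) H) D4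
    -- mild triple 4
    · rcases mild_cases hβ0 hβπ hperm with ⟨h0, hm1, hm2⟩ | ⟨h0, hm1, hm2⟩ | ⟨h0, hm1, hm2⟩
      · have H : Tendsto (fun t => gg (p 5) (q 5) t + gg ((π + p 1 + p 2 - p 5) / 2) ((π + q 1 + q 2 - q 5) / 2) t + gg ((π - p 1 - p 2 - p 5) / 2) ((π - q 1 - q 2 - q 5) / 2) t) (𝓝[>] (0:ℝ)) atTop := by
          have H0 := triple_mild_atTop hy40 hm1 hm2 (y2 := (π + q 1 + q 2 - q 5) / 2) (y3 := (π - q 1 - q 2 - q 5) / 2)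
          rw [h0]
          rw [h0] at H0
          exact H0
        exact disj_add_atTop (disj_add_disj (disj_add_disj (disj_add_disj (D0) D1) D2) D3) H
      · have H : Tendsto (fun t => gg (p 5) (q 5) t + gg ((π + p 1 + p 2 - p 5) / 2) ((π + q 1 + q 2 - q 5) / 2) t + gg ((π - p 1 - p 2 - p 5) / 2) ((π - q 1 - q 2 - q 5) / 2) t) (𝓝[>] (0:ℝ)) atTop := by
          rw [h0]
          exact (triple_mild_atTop hy41 hm1 hm2 (y2 := (q 5)) (y3 := ((π - q 1 - q 2 - q 5) / 2))).congr fun t => by ring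
        exact disj_add_atTop (disj_add_disj (disj_add_disj (disj_add_disj (D0) D1) D2) D3) H
      · have H : Tendsto (fun t => gg (p 5) (q 5) t + gg ((π + p 1 + p 2 - p 5) / 2) ((π + q 1 + q 2 - q 5) / 2) t + gg ((π - p 1 - p 2 - p 5) / 2) ((π - q 1 - q 2 - q 5) / 2) t) (𝓝[>] (0:ℝ)) atTop := by
          rw [h0]
          exact (triple_mild_atTop hy42 hm1 hm2 (y2 := (q 5)) (y3 := ((π + q 1 + q 2 - q 5) / 2))).congr fun t => by ring
        exact disj_add_atTop (disj_add_disj (disj_add_disj (disj_add_disj (D0) D1) D2) D3) H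
  exact Tendsto.congr' hev.symm (Tendsto.atTop_div_const two_pos key)
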